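/- arXiv:0911.0920 — 2 statements merged into one kernel-verified Lean document; each statement's English description precedes it below -/
import Mathlib

section
/- Let g be a unitary transformation of V and vol_g^⊥ a nonzero element of the top exterior power Λ^{codim V^g}(((V^g)^⊥)^*) ⊂ Λ V^*. Then for every dv ∈ Λ V^*, one has dv ∧ vol_g^⊥ = (g·dv) ∧ vol_g^⊥. -/
open Module Submodule

set_option synthInstance.maxHeartbeats 1000000
set_option maxHeartbeats 1000000

/-- `ω` is a nonzero element of the image in `Λ V^*` of the top exterior power of the
subspace `W` of `V^*`: it is a product of the members of some basis of `W`.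
(Applied to `W = (V^g).dualAnnihilator`, the canonical copy of `((V^g)ᗮ)^*` inside
`V^*`, this says `ω` is a choice of `vol_g^⊥`.) -/
def IsVolForm {V : Type*} [NormedAddCommGroup V] [InnerProductSpace ℂ V]
    (W : Submodule ℂ (Module.Dual ℂ V)) (ω : ExteriorAlgebra ℂ (Module.Dual ℂ V)) : Prop :=
  ∃ b : Basis (Fin (finrank ℂ W)) ℂ W,
    ω = (List.ofFn fun i => ExteriorAlgebra.ι ℂ ((b i : W) : Module.Dual ℂ V)).prod

/-!
Write `W` for the annihilator of the fixed space `V^g` in `V^*`, so that `vol_g^⊥` is a product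
of a basis of `W`. Since `ι w` anticommutes with every `ι φ` and `ι w * ι w = 0`, left
multiplication by `ι w` kills `z * vol_g^⊥` for every `w ∈ W` and every `z`. The induced action of
`g` moves every covector only by an element of `W` (`g` fixes `V^g` pointwise), so replacing each
factor `ι φ` of a product by `ι (g·φ)` does not change its product with `vol_g^⊥`.
-/

namespace ExteriorAlgebra

variable {R M : Type*} [CommRing R] [AddCommGroup M] [Module R M]

lemma ι_mul_eq_involute_mul (w : M) (x : ExteriorAlgebra R M) :
    ι R w * x = CliffordAlgebra.involute x * ι R w := by
  induction x using ExteriorAlgebra.induction with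
  | algebraMap r => rw [AlgHom.commutes]; exact (Algebra.commutes r _).symm
  | ι m =>
      rw [CliffordAlgebra.involute_ι, neg_mul]
      exact eq_neg_of_add_eq_zero_right (ι_add_mul_swap m w)
  | mul x y hx hy => rw [map_mul, ← mul_assoc, hx, mul_assoc, hy, ← mul_assoc]
  | add x y hx hy => rw [map_add, mul_add, hx, hy, add_mul]

lemma ι_mul_mul_eq_zero {w : M} {y : ExteriorAlgebra R M} (hy : ι R w * y = 0)
    (z : ExteriorAlgebra R M) : ι R w * (z * y) = 0 := by
  rw [← mul_assoc, ι_mul_eq_involute_mul, mul_assoc, hy, mul_zero]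

lemma ι_mul_prod_ofFn_eq_zero_of_mem_span {n : ℕ} (v : Fin n → M) {w : M}
    (hw : w ∈ span R (Set.range v)) : ι R w * (List.ofFn fun i => ι R (v i)).prod = 0 := by
  induction hw using Submodule.span_induction with
  | mem _ h => obtain ⟨i, rfl⟩ := h; exact ι_mul_prod_list v i
  | zero => rw [map_zero, zero_mul]
  | add _ _ _ _ h₁ h₂ => rw [map_add, add_mul, h₁, h₂, add_zero]
  | smul a _ _ h => rw [map_smul, smul_mul_assoc, h, smul_zero]

lemma mul_eq_map_mul_of_sub_mem {W : Submodule R M} {f : M →ₗ[R] M}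
    (hf : ∀ m, f m - m ∈ W) (x : ExteriorAlgebra R M) {y : ExteriorAlgebra R M}
    (hy : ∀ w ∈ W, ι R w * y = 0) : x * y = map f x * y := by
  induction x using ExteriorAlgebra.induction generalizing y with
  | algebraMap r => rw [AlgHom.commutes]
  | ι m =>
      rw [map_apply_ι, ← sub_eq_zero, ← sub_mul, ← map_sub, ← neg_sub, map_neg, neg_mul,
        hy _ (hf m), neg_zero]
  | mul x₁ x₂ h₁ h₂ =>
      have hy' : ∀ z, ∀ w ∈ W, ι R w * (z * y) = 0 := fun z w hw => ι_mul_mul_eq_zero (hy w hw) z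
      rw [mul_assoc, h₁ (hy' x₂), h₂ hy, map_mul, mul_assoc]
  | add x₁ x₂ h₁ h₂ => rw [map_add, add_mul, add_mul, h₁ hy, h₂ hy]

end ExteriorAlgebra

lemma ι_mul_volForm_eq_zero {V : Type*} [NormedAddCommGroup V] [InnerProductSpace ℂ V]
    {W : Submodule ℂ (Module.Dual ℂ V)} {ω : ExteriorAlgebra ℂ (Module.Dual ℂ V)}
    (hω : IsVolForm W ω) {w : Module.Dual ℂ V} (hw : w ∈ W) :
    ExteriorAlgebra.ι ℂ w * ω = 0 := by
  obtain ⟨b, rfl⟩ := hω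
  refine ExteriorAlgebra.ι_mul_prod_ofFn_eq_zero_of_mem_span _ ?_
  rw [Set.range_comp', ← W.coe_subtype, span_image, b.span_eq, Submodule.map_top, range_subtype]
  exact hw

lemma LinearEquiv.dualMap_symm_sub_mem_dualAnnihilator {R V : Type*} [CommRing R]
    [AddCommGroup V] [Module R V] (g : V ≃ₗ[R] V) (φ : Module.Dual R V) :
    g.symm.toLinearMap.dualMap φ - φ ∈
      (LinearMap.ker (LinearMap.id - g.toLinearMap)).dualAnnihilator := by
  rw [mem_dualAnnihilator]
  intro v hv
  have hgv : g v = v := (sub_eq_zero.mp (LinearMap.mem_ker.mp hv)).symm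
  rw [LinearMap.sub_apply, LinearMap.dualMap_apply, LinearEquiv.coe_toLinearMap,
    g.symm_apply_eq.mpr hgv.symm, sub_self]

theorem wedge_volForm_eq_smul_wedge_volForm_general
    {V : Type*} [NormedAddCommGroup V] [InnerProductSpace ℂ V]
    (g : V ≃ₗᵢ[ℂ] V) (ω : ExteriorAlgebra ℂ (Module.Dual ℂ V))
    (hω : IsVolForm ((LinearMap.ker
        (LinearMap.id - g.toLinearEquiv.toLinearMap)).dualAnnihilator) ω)
    (dv : ExteriorAlgebra ℂ (Module.Dual ℂ V)) :
    dv * ω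
      = (ExteriorAlgebra.map (g.symm.toLinearEquiv.toLinearMap.dualMap)) dv * ω :=
  ExteriorAlgebra.mul_eq_map_mul_of_sub_mem
    g.toLinearEquiv.dualMap_symm_sub_mem_dualAnnihilator dv
    fun _ hw => ι_mul_volForm_eq_zero hω hw

/-- For a unitary `g` and any `dv ∈ Λ V^*`, one has `dv ∧ vol_g^⊥ = (g·dv) ∧ vol_g^⊥`,
where `g` acts on `V^*` by `(g·φ)(v) = φ(g⁻¹ v)` and on `Λ V^*` functorially. -/
theorem wedge_volForm_eq_smul_wedge_volForm
    {V : Type*} [NormedAddCommGroup V] [InnerProductSpace ℂ V] [FiniteDimensional ℂ V]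
    (g : V ≃ₗᵢ[ℂ] V) (ω : ExteriorAlgebra ℂ (Module.Dual ℂ V))
    (hω : IsVolForm ((LinearMap.ker
        (LinearMap.id - g.toLinearEquiv.toLinearMap)).dualAnnihilator) ω)
    (dv : ExteriorAlgebra ℂ (Module.Dual ℂ V)) :
    dv * ω
      = (ExteriorAlgebra.map (g.symm.toLinearEquiv.toLinearMap.dualMap)) dv * ω :=
  wedge_volForm_eq_smul_wedge_volForm_general g ω hω dv
end

section
/- In the complex reflection group G(r,1,n) = (ℤ/rℤ) ≀ S_n acting on ℂ^n by monomial matrices whose nonzero entries are r-th roots of unity, reflection length coincides with the codimension of the fixed subspace: l(g) = codim (ℂ^n)^g for all g. -/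
open Module Submodule

/-- `M` is a monomial matrix whose nonzero entries are `r`-th roots of unity, i.e. an
element of `G(r,1,n) = (ℤ/rℤ) ≀ Sₙ` in its natural representation on `ℂⁿ`. -/
def IsMonomialMat (r n : ℕ) (M : Matrix (Fin n) (Fin n) ℂ) : Prop :=
  ∃ (σ : Equiv.Perm (Fin n)) (c : Fin n → ℂ), (∀ j, c j ^ r = 1) ∧
    ∀ i j, M i j = if i = σ j then c j else 0

/-- The fixed subspace `(ℂⁿ)^M` of a matrix `M`. -/
noncomputable def fixedMat {n : ℕ} (M : Matrix (Fin n) (Fin n) ℂ) : Submodule ℂ (Fin n → ℂ) :=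
  LinearMap.ker (M.mulVecLin - LinearMap.id)

/-- `M` is a reflection in `G(r,1,n)`: a nonidentity element of `G(r,1,n)` fixing a
hyperplane pointwise. -/
def IsReflMat (r n : ℕ) (M : Matrix (Fin n) (Fin n) ℂ) : Prop :=
  IsMonomialMat r n M ∧ M ≠ 1 ∧ finrank ℂ (fixedMat M) = n - 1

/-- The reflection length in `G(r,1,n)`: the minimal number of reflections of `G(r,1,n)`
whose product is `M`. -/
noncomputable def reflLengthMat (r n : ℕ) (M : Matrix (Fin n) (Fin n) ℂ) : ℕ :=
  sInf {k : ℕ | ∃ w : List (Matrix (Fin n) (Fin n) ℂ),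
    w.length = k ∧ (∀ s ∈ w, IsReflMat r n s) ∧ w.prod = M}

open Matrix

section Monomial

variable {R : Type*} {n : ℕ}

def monoMat [Zero R] (σ : Equiv.Perm (Fin n)) (c : Fin n → R) : Matrix (Fin n) (Fin n) R :=
  Matrix.of fun i j => if i = σ j then c j else 0

lemma monoMat_apply [Zero R] (σ : Equiv.Perm (Fin n)) (c : Fin n → R) (i j : Fin n) :
    monoMat σ c i j = if i = σ j then c j else 0 := rfl

variable [Semiring R]

lemma monoMat_mulVec_apply (σ : Equiv.Perm (Fin n)) (c x : Fin n → R) (j : Fin n) :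
    (monoMat σ c *ᵥ x) (σ j) = c j * x j := by
  simp [mulVec, dotProduct, monoMat_apply]

lemma monoMat_mulVec_single (σ : Equiv.Perm (Fin n)) (c : Fin n → R) (j : Fin n) :
    monoMat σ c *ᵥ Pi.single j 1 = Pi.single (σ j) (c j) := by
  ext i
  simp [monoMat_apply, Pi.single_apply]

lemma monoMat_mul (σ τ : Equiv.Perm (Fin n)) (c d : Fin n → R) :
    monoMat σ c * monoMat τ d = monoMat (σ * τ) (fun j => c (τ j) * d j) := by
  ext i j
  simp only [mul_apply, monoMat_apply, Equiv.Perm.mul_apply]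
  rw [Finset.sum_eq_single (τ j) (fun b _ hb => by simp [hb]) (by simp)]
  by_cases h : i = σ (τ j) <;> simp [h]

lemma monoMat_one : monoMat (1 : Equiv.Perm (Fin n)) (fun _ => (1 : R)) = 1 := by
  ext i j
  by_cases h : i = j <;> simp [monoMat_apply, one_apply, h]

end Monomial

lemma monoMat_inv_mul_monoMat {K : Type*} [DivisionRing K] {n : ℕ} (σ : Equiv.Perm (Fin n))
    {c : Fin n → K} (hc : ∀ j, c j ≠ 0) :
    monoMat σ⁻¹ (fun i => (c (σ⁻¹ i))⁻¹) * monoMat σ c = 1 := by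
  rw [monoMat_mul, inv_mul_cancel, ← monoMat_one]
  congr 1
  ext j
  simp [hc]

lemma isMonomialMat_iff {r n : ℕ} {M : Matrix (Fin n) (Fin n) ℂ} :
    IsMonomialMat r n M ↔ ∃ σ c, (∀ j, c j ^ r = 1) ∧ M = monoMat σ c := by
  refine exists_congr fun σ => exists_congr fun c => and_congr_right fun _ => ?_
  rw [← Matrix.ext_iff]
  rfl

lemma IsMonomialMat.mul {r n : ℕ} {A B : Matrix (Fin n) (Fin n) ℂ} (hA : IsMonomialMat r n A)
    (hB : IsMonomialMat r n B) : IsMonomialMat r n (A * B) := by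
  obtain ⟨σ, c, hc, rfl⟩ := isMonomialMat_iff.mp hA
  obtain ⟨τ, d, hd, rfl⟩ := isMonomialMat_iff.mp hB
  exact isMonomialMat_iff.mpr ⟨_, _, fun j => by rw [mul_pow, hc, hd, one_mul], monoMat_mul ..⟩

section FixedSubspace

variable {n : ℕ}

lemma mem_fixedMat {M : Matrix (Fin n) (Fin n) ℂ} {x : Fin n → ℂ} :
    x ∈ fixedMat M ↔ M *ᵥ x = x := by
  simp [fixedMat, sub_eq_zero]

lemma mem_fixedMat_monoMat {σ : Equiv.Perm (Fin n)} {c x : Fin n → ℂ} :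
    x ∈ fixedMat (monoMat σ c) ↔ ∀ j, c j * x j = x (σ j) := by
  rw [mem_fixedMat, funext_iff, ← σ.forall_congr_right]
  simp only [monoMat_mulVec_apply]

lemma fixedMat_one : fixedMat (1 : Matrix (Fin n) (Fin n) ℂ) = ⊤ := by
  ext x
  simp [mem_fixedMat]

lemma eq_one_of_fixedMat_eq_top {M : Matrix (Fin n) (Fin n) ℂ} (h : fixedMat M = ⊤) : M = 1 :=
  ext_of_mulVec_single fun j => by
    rw [one_mulVec, ← mem_fixedMat, h]
    exact Submodule.mem_top

lemma finrank_fixedMat_le (M : Matrix (Fin n) (Fin n) ℂ) : finrank ℂ (fixedMat M) ≤ n :=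
  (Submodule.finrank_le _).trans_eq (Module.finrank_fin_fun ℂ)

lemma finrank_fixedMat_add_finrank_fixedMat_le (A B : Matrix (Fin n) (Fin n) ℂ) :
    finrank ℂ (fixedMat A) + finrank ℂ (fixedMat B) ≤ finrank ℂ (fixedMat (A * B)) + n := by
  have hinf : fixedMat A ⊓ fixedMat B ≤ fixedMat (A * B) := by
    rintro x ⟨hA, hB⟩
    rw [mem_fixedMat, ← mulVec_mulVec, mem_fixedMat.mp hB, mem_fixedMat.mp hA]
  have hsup := (Submodule.finrank_le (fixedMat A ⊔ fixedMat B)).trans_eq (Module.finrank_fin_fun ℂ)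
  have := Submodule.finrank_sup_add_finrank_inf_eq (fixedMat A) (fixedMat B)
  have := Submodule.finrank_mono hinf
  omega

lemma le_finrank_fixedMat_list_prod_add_length (w : List (Matrix (Fin n) (Fin n) ℂ))
    (hw : ∀ s ∈ w, n ≤ finrank ℂ (fixedMat s) + 1) :
    n ≤ finrank ℂ (fixedMat w.prod) + w.length := by
  induction w with
  | nil => rw [List.prod_nil, fixedMat_one, finrank_top, Module.finrank_fin_fun]; omega
  | cons s w ih =>
    have hs := hw s List.mem_cons_self
    have := ih fun x hx => hw x (List.mem_cons_of_mem s hx)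
    have := finrank_fixedMat_add_finrank_fixedMat_le s w.prod
    rw [List.prod_cons, List.length_cons]
    omega

lemma fixedMat_lt_fixedMat_mul {M t T : Matrix (Fin n) (Fin n) ℂ} (hT : T * t = 1)
    (hle : fixedMat M ≤ fixedMat t) {v : Fin n → ℂ} (hv : M *ᵥ v = t *ᵥ v) (hMv : M *ᵥ v ≠ v) :
    fixedMat M < fixedMat (T * M) := by
  have hTt : ∀ x, T *ᵥ (t *ᵥ x) = x := fun x => by rw [mulVec_mulVec, hT, one_mulVec]
  refine SetLike.lt_iff_le_and_exists.mpr ⟨fun x hx => mem_fixedMat.mpr ?_, v, ?_, ?_⟩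
  · calc (T * M) *ᵥ x = T *ᵥ (t *ᵥ x) := by
          rw [← mulVec_mulVec, mem_fixedMat.mp hx, mem_fixedMat.mp (hle hx)]
      _ = x := hTt x
  · rw [mem_fixedMat, ← mulVec_mulVec, hv, hTt]
  · rwa [mem_fixedMat]

end FixedSubspace

section Reflection

variable {n : ℕ} (j k : Fin n) (a : ℂ)

/-- For `k ≠ j` the reflection in the hyperplane `x_k = a x_j`; for `k = j` the diagonal reflection
scaling `x_j` by `a`. -/
noncomputable def monoRefl : Matrix (Fin n) (Fin n) ℂ :=
  monoMat (Equiv.swap j k) (Function.update (Function.update 1 k a⁻¹) j a)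

lemma monoRefl_mulVec_single : monoRefl j k a *ᵥ Pi.single j 1 = Pi.single k a := by
  rw [monoRefl, monoMat_mulVec_single, Equiv.swap_apply_left, Function.update_self]

variable {j k a}

lemma mem_fixedMat_monoRefl (ha : a ≠ 0) {x : Fin n → ℂ} :
    x ∈ fixedMat (monoRefl j k a) ↔ x k = a * x j := by
  rw [monoRefl, mem_fixedMat_monoMat]
  refine ⟨fun h => by simpa using (h j).symm, fun h m => ?_⟩
  by_cases hmj : m = j
  · simp [hmj, h]
  by_cases hmk : m = k
  · subst hmk
    rw [Function.update_of_ne hmj, Function.update_self, Equiv.swap_apply_right, h,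
      inv_mul_cancel_left₀ ha]
  · simp [hmj, hmk, Equiv.swap_apply_of_ne_of_ne]

lemma isReflMat_monoRefl {r : ℕ} (ha : a ^ r = 1) (ha0 : a ≠ 0)
    (hne : Pi.single k a ≠ (Pi.single j 1 : Fin n → ℂ)) : IsReflMat r n (monoRefl j k a) := by
  have hfix :
      fixedMat (monoRefl j k a) = LinearMap.ker (LinearMap.proj k - a • LinearMap.proj j) := by
    ext x
    simp [mem_fixedMat_monoRefl ha0, sub_eq_zero]
  have hne1 : monoRefl j k a ≠ 1 := fun h => hne (by
    rw [← monoRefl_mulVec_single, h, one_mulVec])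
  refine ⟨isMonomialMat_iff.mpr ⟨_, _, fun m => ?_, rfl⟩, hne1, ?_⟩
  · simp only [Function.update_apply]
    split_ifs <;> simp [ha]
  · have hf : LinearMap.proj k - a • LinearMap.proj j ≠ (0 : Module.Dual ℂ (Fin n → ℂ)) :=
      fun h => hne1 (eq_one_of_fixedMat_eq_top (by rw [hfix, h, LinearMap.ker_zero]))
    have := Module.Dual.finrank_ker_add_one_of_ne_zero hf
    rw [Module.finrank_fin_fun] at this
    rw [hfix]
    omega

end Reflection

lemma IsMonomialMat.exists_mul_eq_one {r n : ℕ} (hr : 0 < r) {M : Matrix (Fin n) (Fin n) ℂ}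
    (hM : IsMonomialMat r n M) : ∃ T, IsMonomialMat r n T ∧ T * M = 1 := by
  obtain ⟨σ, c, hc, rfl⟩ := isMonomialMat_iff.mp hM
  exact ⟨_, isMonomialMat_iff.mpr ⟨_, _, fun i => by rw [inv_pow, hc, inv_one], rfl⟩,
    monoMat_inv_mul_monoMat σ fun j => (IsUnit.of_pow_eq_one (hc j) hr.ne').ne_zero⟩

lemma exists_isReflMat_mul_fixedMat_lt {r n : ℕ} (hr : 0 < r) {M : Matrix (Fin n) (Fin n) ℂ}
    (hM : IsMonomialMat r n M) (hne : M ≠ 1) :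
    ∃ t N, IsReflMat r n t ∧ IsMonomialMat r n N ∧ t * N = M ∧ fixedMat M < fixedMat N := by
  obtain ⟨σ, c, hc, rfl⟩ := isMonomialMat_iff.mp hM
  obtain ⟨j, hj⟩ : ∃ j, monoMat σ c *ᵥ Pi.single j 1 ≠ Pi.single j 1 := by
    by_contra! h
    exact hne (ext_of_mulVec_single fun j => by rw [h j, one_mulVec])
  have hcj : c j ≠ 0 := (IsUnit.of_pow_eq_one (hc j) hr.ne').ne_zero
  have hv : monoMat σ c *ᵥ Pi.single j 1 = monoRefl j (σ j) (c j) *ᵥ Pi.single j 1 := by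
    rw [monoMat_mulVec_single, monoRefl_mulVec_single]
  have ht : IsReflMat r n (monoRefl j (σ j) (c j)) :=
    isReflMat_monoRefl (hc j) hcj (by rwa [← monoMat_mulVec_single])
  have hle : fixedMat (monoMat σ c) ≤ fixedMat (monoRefl j (σ j) (c j)) := fun x hx =>
    (mem_fixedMat_monoRefl hcj).mpr (mem_fixedMat_monoMat.mp hx j).symm
  obtain ⟨T, hT, hTt⟩ := ht.1.exists_mul_eq_one hr
  exact ⟨_, T * monoMat σ c, ht, hT.mul hM, by rw [← mul_assoc, mul_eq_one_comm.mp hTt, one_mul],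
    fixedMat_lt_fixedMat_mul hTt hle hv hj⟩

lemma exists_isReflMat_list_prod_eq {r n : ℕ} (hr : 0 < r) {M : Matrix (Fin n) (Fin n) ℂ}
    (hM : IsMonomialMat r n M) :
    ∃ w : List (Matrix (Fin n) (Fin n) ℂ), w.length ≤ n - finrank ℂ (fixedMat M) ∧
      (∀ s ∈ w, IsReflMat r n s) ∧ w.prod = M := by
  induction hd : n - finrank ℂ (fixedMat M) using Nat.strong_induction_on generalizing M with
  | _ d ih =>
  rcases eq_or_ne M 1 with rfl | hne
  · exact ⟨[], Nat.zero_le _, by simp, List.prod_nil⟩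
  obtain ⟨t, N, ht, hN, rfl, hlt⟩ := exists_isReflMat_mul_fixedMat_lt hr hM hne
  have := Submodule.finrank_lt_finrank_of_lt hlt
  have := finrank_fixedMat_le N
  obtain ⟨w, hw, hrefl, rfl⟩ := ih _ (by omega) hN rfl
  refine ⟨t :: w, by rw [List.length_cons]; omega, ?_, List.prod_cons⟩
  intro s hs
  rcases List.mem_cons.mp hs with rfl | hs
  exacts [ht, hrefl s hs]

/-- In the complex reflection group `G(r,1,n)`, reflection length coincides with the
codimension of the fixed subspace. -/
theorem reflLength_eq_codim_G_r_1_n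
    (r n : ℕ) (hr : 0 < r) (M : Matrix (Fin n) (Fin n) ℂ) (hM : IsMonomialMat r n M) :
    reflLengthMat r n M = n - finrank ℂ (fixedMat M) := by
  obtain ⟨w, hw, hrefl, hprod⟩ := exists_isReflMat_list_prod_eq hr hM
  refine le_antisymm (le_trans (Nat.sInf_le ⟨w, rfl, hrefl, hprod⟩) hw)
    (le_csInf ⟨_, w, rfl, hrefl, hprod⟩ ?_)
  rintro k ⟨v, rfl, hv, rfl⟩
  have := le_finrank_fixedMat_list_prod_add_length v fun s hs => by
    have := (hv s hs).2.2
    omega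
  omega
end
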